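/- arXiv:2103.02527 — 5 statements merged into one kernel-verified Lean document; each statement's English description precedes it below -/
import Mathlib

section
/- Let I ⊆ [n], let v : I → [n] be injective, let c : I → [n] satisfy c(i) ≠ v(i) for all i ∈ I, and fix i ∈ I. Let S_i be the set of permutations σ of [n] with σ(j) ≠ v(j) for all j ∈ I and σ(i) = c(i). Then n·|S_i| ≥ A(n,|I|) − n·(n−2)!, where A(n,|I|) is the number of permutations avoiding v on I. -/
open Nat

open Finset

/-!
For σ avoiding v on I, let ℓ = σ⁻¹(c i) and swap the values of σ at i and ℓ. The result takes
the value c i at i, and it still avoids v on I unless σ i = v ℓ. Since σ is recovered from its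
image together with ℓ, at most n permutations are mapped to each element of S_i. The exceptional
permutations satisfy σ ℓ = c i and σ i = v ℓ for some ℓ ≠ i. For each ℓ this pins σ at two
points, so there are at most n · (n - 2)! of them.
-/

open Equiv

section Counting

variable {α : Type*} [Fintype α] [DecidableEq α]

theorem card_perm_fixing (s : Finset α) :
    #{σ : Perm α | ∀ a ∈ s, σ a = a} = (Fintype.card α - #s)! := by
  rw [← Fintype.card_subtype, ← Fintype.card_coe s, ← Fintype.card_subtype_compl (· ∈ s),
    ← Fintype.card_perm]
  exact Fintype.card_congr <| ((Perm.subtypeEquivSubtypePerm (· ∉ s)).trans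
    (subtypeEquivRight fun σ => by simp only [not_not])).symm

theorem card_perm_agreeing_on (σ₀ : Perm α) (s : Finset α) :
    #{σ : Perm α | ∀ a ∈ s, σ a = σ₀ a} = (Fintype.card α - #s)! := by
  rw [← card_perm_fixing s]
  refine card_nbij' (σ₀⁻¹ * ·) (σ₀ * ·) ?_ ?_ ?_ ?_ <;> intro σ <;>
    simp [symm_apply_eq]

theorem card_perm_apply_eq_and_apply_eq_le {a b : α} (hab : a ≠ b) (x y : α) :
    #{σ : Perm α | σ a = x ∧ σ b = y} ≤ (Fintype.card α - 2)! := by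
  by_cases h : ∃ σ₀ : Perm α, σ₀ a = x ∧ σ₀ b = y
  · obtain ⟨σ₀, rfl, rfl⟩ := h
    rw [← card_pair hab, ← card_perm_agreeing_on σ₀]
    simp
  · rw [filter_eq_empty_iff.mpr fun σ _ hσ => h ⟨σ, hσ⟩, card_empty]
    exact Nat.zero_le _

end Counting

section Swap

variable {α : Type*} [DecidableEq α] {I : Finset α} {v c : α → α} {i : α}

theorem mul_swap_avoids_and_apply_eq (hci : c i ≠ v i) {σ : Perm α} (hσ : ∀ j ∈ I, σ j ≠ v j)
    (hσi : σ i ≠ v (σ⁻¹ (c i))) :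
    (∀ j ∈ I, (σ * swap i (σ⁻¹ (c i))) j ≠ v j) ∧ (σ * swap i (σ⁻¹ (c i))) i = c i := by
  set ℓ := σ⁻¹ (c i)
  have hσℓ : σ ℓ = c i := σ.apply_symm_apply _
  refine ⟨fun j hj => ?_, by simp [hσℓ]⟩
  rcases eq_or_ne j i with rfl | hji
  · simpa [hσℓ] using hci
  rcases eq_or_ne j ℓ with rfl | hjℓ
  · simpa using hσi
  · simpa [swap_apply_of_ne_of_ne hji hjℓ] using hσ j hj

variable [Fintype α]

theorem card_avoiding_sdiff_le (hci : c i ≠ v i) :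
    #(({σ | ∀ j ∈ I, σ j ≠ v j} : Finset (Perm α)) \ ({σ | σ i = v (σ⁻¹ (c i))} : Finset _)) ≤
      Fintype.card α * #{σ : Perm α | (∀ j ∈ I, σ j ≠ v j) ∧ σ i = c i} := by
  set S := ({σ : Perm α | (∀ j ∈ I, σ j ≠ v j) ∧ σ i = c i} : Finset _)
  calc _ ≤ #((S ×ˢ univ).image fun p => p.1 * swap i p.2) := card_le_card ?_
    _ ≤ #(S ×ˢ univ) := card_image_le
    _ = _ := by rw [card_product, Finset.card_univ, mul_comm]
  intro σ hσ
  simp only [mem_sdiff, mem_filter, mem_univ, true_and] at hσ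
  refine mem_image.mpr ⟨(σ * swap i (σ⁻¹ (c i)), σ⁻¹ (c i)), ?_, by simp [mul_assoc]⟩
  simpa [S] using mul_swap_avoids_and_apply_eq hci hσ.1 hσ.2

theorem card_apply_eq_apply_inv_le (hci : c i ≠ v i) :
    #{σ : Perm α | σ i = v (σ⁻¹ (c i))} ≤ Fintype.card α * (Fintype.card α - 2)! := by
  calc _ = ∑ ℓ, #{σ ∈ {σ : Perm α | σ i = v (σ⁻¹ (c i))} | σ⁻¹ (c i) = ℓ} :=
        card_eq_sum_card_fiberwise fun _ _ => mem_coe.mpr (mem_univ _)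
    _ ≤ ∑ _ℓ : α, (Fintype.card α - 2)! := sum_le_sum fun ℓ _ => ?_
    _ = _ := by simp
  rcases eq_or_ne ℓ i with rfl | hℓi
  · rw [filter_eq_empty_iff.mpr fun σ hσ hσℓ => hci ?_, card_empty]
    · exact Nat.zero_le _
    simp only [mem_filter, mem_univ, true_and, hσℓ] at hσ
    exact (Perm.inv_eq_iff_eq.mp hσℓ).trans hσ
  · refine (card_le_card fun σ hσ => ?_).trans
      (card_perm_apply_eq_and_apply_eq_le hℓi.symm (v ℓ) (c i))
    simp only [mem_filter, mem_univ, true_and] at hσ ⊢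
    exact ⟨hσ.2 ▸ hσ.1, hσ.2 ▸ σ.apply_symm_apply _⟩

theorem card_avoiding_le (hci : c i ≠ v i) :
    #{σ : Perm α | ∀ j ∈ I, σ j ≠ v j} ≤
      Fintype.card α * #{σ : Perm α | (∀ j ∈ I, σ j ≠ v j) ∧ σ i = c i} +
        Fintype.card α * (Fintype.card α - 2)! :=
  card_le_card_sdiff_add_card.trans
    (Nat.add_le_add (card_avoiding_sdiff_le hci) (card_apply_eq_apply_inv_le hci))

end Swap

theorem stmt_5_general (n : ℕ) (I : Finset (Fin n)) (v c : Fin n → Fin n)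
    (hc : ∀ i ∈ I, c i ≠ v i) (i : Fin n) (hi : i ∈ I) :
    (n : ℤ) *
        ((Finset.univ.filter
            (fun σ : Equiv.Perm (Fin n) =>
              (∀ j ∈ I, σ j ≠ v j) ∧ σ i = c i)).card : ℤ) ≥
      ((Finset.univ.filter
          (fun σ : Equiv.Perm (Fin n) => ∀ j ∈ I, σ j ≠ v j)).card : ℤ) -
        (n : ℤ) * ((n - 2)! : ℤ) := by
  have key := card_avoiding_le (I := I) (hc i hi)
  rw [Fintype.card_fin] at key
  rw [ge_iff_le, sub_le_iff_le_add]
  exact_mod_cast key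

/-- `n |S_i| ≥ A(n,|I|) − n (n−2)!`, where `S_i` is the set of `0`-queries for `v`
on `I` taking value `c i` at `i`, and `A(n,|I|)` is the number of `0`-queries for `v`. -/
theorem stmt_5 (n : ℕ) (I : Finset (Fin n)) (v c : Fin n → Fin n)
    (hv : Set.InjOn v I) (hc : ∀ i ∈ I, c i ≠ v i) (i : Fin n) (hi : i ∈ I) :
    (n : ℤ) *
        ((Finset.univ.filter
            (fun σ : Equiv.Perm (Fin n) =>
              (∀ j ∈ I, σ j ≠ v j) ∧ σ i = c i)).card : ℤ) ≥
      ((Finset.univ.filter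
          (fun σ : Equiv.Perm (Fin n) => ∀ j ∈ I, σ j ≠ v j)).card : ℤ) -
        (n : ℤ) * ((n - 2)! : ℤ) :=
  stmt_5_general n I v c hc i hi
end

section
/- Let n ≥ 6, I ⊆ [n], v : I → [n] injective, c : I → [n] with c(i) ≠ v(i) for all i ∈ I, and let i ≠ j ∈ I with c(i) ≠ c(j). Then (n−4)(n−5)·|S_i ∩ S_j| ≤ A(n,|I|), where S_i (resp. S_j) is the set of permutations σ of [n] avoiding v on I with σ(i) = c(i) (resp. σ(j) = c(j)), and A(n,|I|) is the number of permutations of [n] avoiding v on I. -/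
/-!
Swap position `i` of `σ ∈ S_i ∩ S_j` with a position `ℓ`. The result still avoids `v` on `I`
unless `σ ℓ = v i` or `ℓ` is the (by injectivity of `v`, at most one) `k ∈ I` with `v k = c i`,
and it still sends `j` to `c j` unless `ℓ = j`: this leaves at least `n - 3` choices of `ℓ`.
Swapping then position `j` in the same way leaves at least `n - 2` choices. Each swap is
injective in the pair (permutation, partner), because the partner is recovered as the preimage
of the known value `c i` (resp. `c j`). Hence `(n - 3)(n - 2) |S_i ∩ S_j| ≤ A(n, |I|)`.
-/

open Finset Equiv

variable {α : Type*} [DecidableEq α]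

theorem Equiv.Perm.mul_swap_injOn (i a : α) :
    Set.InjOn (fun p : Perm α × α => p.1 * swap i p.2) {p | p.1 i = a} := by
  rintro ⟨σ, ℓ⟩ (hσ : σ i = a) ⟨τ, m⟩ (hτ : τ i = a) h
  have inv_apply : ∀ ρ : Perm α, ∀ k, ρ i = a → (ρ * swap i k)⁻¹ a = k := fun ρ k hρ => by
    rw [Perm.inv_eq_iff_eq, Perm.mul_apply, swap_apply_right, hρ]
  have hℓm : ℓ = m := by
    rw [← inv_apply σ ℓ hσ, ← inv_apply τ m hτ]
    exact congrArg (· ⁻¹ a) h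
  subst hℓm
  simpa using h

theorem card_mul_le_card_filter_of_mul_swap [Fintype α] {S : Finset (Perm α)}
    {P : Perm α → Prop} [DecidablePred P] {i a : α} {m : ℕ}
    (hS : ∀ σ ∈ S, σ i = a) (hm : ∀ σ ∈ S, m ≤ #{ℓ | P (σ * swap i ℓ)}) :
    m * #S ≤ #{τ | P τ} := by
  set T := (S ×ˢ univ).filter fun p : Perm α × α => P (p.1 * swap i p.2)
  have hT : #T = ∑ σ ∈ S, #{ℓ | P (σ * swap i ℓ)} := by
    rw [card_filter, sum_product]
    simp only [card_filter]
  calc m * #S = ∑ _σ ∈ S, m := by rw [sum_const, smul_eq_mul, mul_comm]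
    _ ≤ #T := hT ▸ sum_le_sum hm
    _ ≤ #{τ | P τ} :=
      card_le_card_of_injOn _ (fun p hp => mem_filter.mpr ⟨mem_univ _, (mem_filter.mp hp).2⟩)
        ((Perm.mul_swap_injOn i a).mono fun p hp => hS _ (mem_product.mp (mem_filter.mp hp).1).1)

theorem card_filter_eq_le_one_of_injOn {v : α → α} {I : Finset α} (hv : Set.InjOn v I)
    (a : α) : #(I.filter (v · = a)) ≤ 1 :=
  card_le_one.mpr fun _ hk _ hl =>
    hv (mem_filter.mp hk).1 (mem_filter.mp hl).1
      ((mem_filter.mp hk).2.trans (mem_filter.mp hl).2.symm)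

abbrev AvoidsOn (v : α → α) (I : Finset α) (σ : Perm α) : Prop :=
  ∀ k ∈ I, σ k ≠ v k

section AvoidsOn

variable {v : α → α} {I : Finset α} {σ : Perm α}

theorem AvoidsOn.mul_swap {i ℓ : α} (hσ : AvoidsOn v I σ) (hℓi : σ ℓ ≠ v i)
    (hiℓ : ℓ ∈ I → v ℓ ≠ σ i) : AvoidsOn v I (σ * swap i ℓ) := by
  intro k hk
  rw [Perm.mul_apply]
  rcases eq_or_ne k i with rfl | hki
  · rwa [swap_apply_left]
  rcases eq_or_ne k ℓ with rfl | hkℓ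
  · rw [swap_apply_right]
    exact (hiℓ hk).symm
  · rw [swap_apply_of_ne_of_ne hki hkℓ]
    exact hσ k hk

variable [Fintype α]

theorem AvoidsOn.card_sub_two_le_card_mul_swap (hv : Set.InjOn v I) (hσ : AvoidsOn v I σ)
    (i : α) : Fintype.card α - 2 ≤ #{ℓ | AvoidsOn v I (σ * swap i ℓ)} := by
  set bad := insert (σ⁻¹ (v i)) (I.filter (v · = σ i))
  have hbad : #bad ≤ 2 :=
    (card_insert_le _ _).trans (by have := card_filter_eq_le_one_of_injOn hv (σ i); omega)
  have hgood : badᶜ ⊆ ({ℓ | AvoidsOn v I (σ * swap i ℓ)} : Finset α) := by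
    intro ℓ hℓ
    simp only [bad, mem_compl, mem_insert, mem_filter, not_or, not_and] at hℓ
    exact mem_filter.mpr ⟨mem_univ _, hσ.mul_swap (fun h => hℓ.1 (Perm.eq_inv_iff_eq.mpr h)) hℓ.2⟩
  calc Fintype.card α - 2 ≤ #badᶜ := by rw [card_compl]; omega
    _ ≤ _ := card_le_card hgood

theorem AvoidsOn.card_sub_three_le_card_mul_swap_apply_eq (hv : Set.InjOn v I)
    (hσ : AvoidsOn v I σ) {i j : α} (hij : i ≠ j) :
    Fintype.card α - 3 ≤ #{ℓ | AvoidsOn v I (σ * swap i ℓ) ∧ (σ * swap i ℓ) j = σ j} := by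
  set good : Finset α := {ℓ | AvoidsOn v I (σ * swap i ℓ)}
  have hsub : good.erase j ⊆
      ({ℓ | AvoidsOn v I (σ * swap i ℓ) ∧ (σ * swap i ℓ) j = σ j} : Finset α) := by
    intro ℓ hℓ
    obtain ⟨hℓj, hℓ⟩ := mem_erase.mp hℓ
    refine mem_filter.mpr ⟨mem_univ _, (mem_filter.mp hℓ).2, ?_⟩
    rw [Perm.mul_apply, swap_apply_of_ne_of_ne hij.symm (Ne.symm hℓj)]
  calc Fintype.card α - 3 ≤ #good - 1 := by
        have : Fintype.card α - 2 ≤ #good := hσ.card_sub_two_le_card_mul_swap hv i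
        omega
    _ ≤ #(good.erase j) := pred_card_le_card_erase
    _ ≤ _ := card_le_card hsub

theorem sub_three_mul_sub_two_mul_card_avoidsOn_apply_eq_le (hv : Set.InjOn v I) {i j : α}
    (hij : i ≠ j) (a b : α) :
    (Fintype.card α - 3) * (Fintype.card α - 2) * #{σ | AvoidsOn v I σ ∧ σ i = a ∧ σ j = b} ≤
      #{σ | AvoidsOn v I σ} := by
  have swap_i : (Fintype.card α - 3) * #{σ | AvoidsOn v I σ ∧ σ i = a ∧ σ j = b} ≤
      #{σ | AvoidsOn v I σ ∧ σ j = b} := by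
    refine card_mul_le_card_filter_of_mul_swap (a := a)
      (fun σ hσ => (mem_filter.mp hσ).2.2.1) fun σ hσ => ?_
    obtain ⟨hav, -, hσj⟩ : AvoidsOn v I σ ∧ σ i = a ∧ σ j = b := (mem_filter.mp hσ).2
    simpa only [hσj] using hav.card_sub_three_le_card_mul_swap_apply_eq hv hij
  have swap_j : (Fintype.card α - 2) * #{σ | AvoidsOn v I σ ∧ σ j = b} ≤
      #{σ | AvoidsOn v I σ} :=
    card_mul_le_card_filter_of_mul_swap (fun σ hσ => (mem_filter.mp hσ).2.2) fun σ hσ =>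
      AvoidsOn.card_sub_two_le_card_mul_swap hv (mem_filter.mp hσ).2.1 j
  calc _ = (Fintype.card α - 2) *
        ((Fintype.card α - 3) * #{σ | AvoidsOn v I σ ∧ σ i = a ∧ σ j = b}) := by ring
    _ ≤ _ := (Nat.mul_le_mul_left _ swap_i).trans swap_j

end AvoidsOn

theorem stmt_7_general (n : ℕ) (I : Finset (Fin n)) (v c : Fin n → Fin n)
    (hv : Set.InjOn v I) (i j : Fin n)
    (hij : i ≠ j) :
    (n - 4) * (n - 5) *
        ((Finset.univ.filter
            (fun σ : Equiv.Perm (Fin n) =>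
              (∀ k ∈ I, σ k ≠ v k) ∧ σ i = c i ∧ σ j = c j)).card) ≤
      (Finset.univ.filter
          (fun σ : Equiv.Perm (Fin n) => ∀ k ∈ I, σ k ≠ v k)).card := by
  have h := sub_three_mul_sub_two_mul_card_avoidsOn_apply_eq_le hv hij (c i) (c j)
  rw [Fintype.card_fin] at h
  refine Nat.le_trans (Nat.mul_le_mul_right _ (Nat.mul_le_mul (by omega : n - 4 ≤ n - 3)
    (by omega : n - 5 ≤ n - 2))) ?_
  -- `Fin n` decides the avoidance predicate by `Nat.decidableForallFin`, not the generic instance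
  convert h using 4

/-- `(n−4)(n−5) |S_i ∩ S_j| ≤ A(n,|I|)` for distinct `i j ∈ I` with `c i ≠ c j`. -/
theorem stmt_7 (n : ℕ) (hn : 6 ≤ n) (I : Finset (Fin n)) (v c : Fin n → Fin n)
    (hv : Set.InjOn v I) (hc : ∀ k ∈ I, c k ≠ v k) (i j : Fin n)
    (hi : i ∈ I) (hj : j ∈ I) (hij : i ≠ j) (hcij : c i ≠ c j) :
    (n - 4) * (n - 5) *
        ((Finset.univ.filter
            (fun σ : Equiv.Perm (Fin n) =>
              (∀ k ∈ I, σ k ≠ v k) ∧ σ i = c i ∧ σ j = c j)).card) ≤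
      (Finset.univ.filter
          (fun σ : Equiv.Perm (Fin n) => ∀ k ∈ I, σ k ≠ v k)).card :=
  stmt_7_general n I v c hv i j hij
end

section
/- There exists a constant C (e.g. C = 28) and n₀ such that for all n ≥ n₀ there exists a set Q of at most C·n·log n permutations of [n] with the following property: for every nonempty I ⊆ [n], every injective v : I → [n], and every function c : I → [n] with c(i) ≠ v(i) for all i ∈ I, there exists q ∈ Q such that q(i) ≠ v(i) for all i ∈ I but q(i) = c(i) for some i ∈ I. -/
/-!
Let `n = |α|`, `k = |I|` and `N = n!`. At least `D_n ≥ 11 N / 30` permutations avoid `v` on `I`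
(compose the derangements with a permutation extending `v`). Switching a permutation `q` that
avoids both `v` and `c` at a point `j ∈ I`, i.e. composing it with the transposition that makes
`j ↦ c j`, gives a discriminating permutation unless `q` sends `j` to `v p`, where `q p = c j` with
`p ∈ I`; this happens for at most `k² (n - 2)!` pairs `(q, j)`, while each discriminating
permutation arises from at most `2n` pairs. Double counting gives at least `k N / (9 n)`
discriminating permutations.

Hence `m = ⌊28 n log n⌋` independent uniform permutations all miss them with probability at most
`x ^ k`, `x = exp (-m / (9 n)) ≈ n ^ (-28 / 9)`. Normalising `v` and `c` off `I` leaves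
`n ^ (2 k)` triples for each `I`, so the union bound is
`∑_{I ≠ ∅} (n² x) ^ |I| = (1 + n² x) ^ n - 1`, which is `< 1` because `n³ x < 1 / 2`.
-/

open Finset Equiv Equiv.Perm
open scoped Nat

/-- `n!` satisfies the recurrence `D (n + 2) = (n + 1) (D n + D (n + 1))` of the derangement
numbers. -/
theorem mul_factorial_le_mul_numDerangements_add_two {a b n : ℕ}
    (h₀ : a * n ! ≤ b * numDerangements n) (h₁ : a * (n + 1)! ≤ b * numDerangements (n + 1)) :
    a * (n + 2)! ≤ b * numDerangements (n + 2) := by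
  have hfact : (n + 2)! = (n + 1) * (n ! + (n + 1)!) := by
    simp only [Nat.factorial_succ]; ring
  calc a * (n + 2)! = (n + 1) * (a * n ! + a * (n + 1)!) := by rw [hfact]; ring
    _ ≤ (n + 1) * (b * numDerangements n + b * numDerangements (n + 1)) := by gcongr
    _ = b * numDerangements (n + 2) := by rw [numDerangements_add_two]; ring

theorem eleven_mul_factorial_le_thirty_mul_numDerangements {n : ℕ} (hn : 4 ≤ n) :
    11 * n ! ≤ 30 * numDerangements n := by
  suffices ∀ n ≥ 4, 11 * n ! ≤ 30 * numDerangements n ∧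
      11 * (n + 1)! ≤ 30 * numDerangements (n + 1) from (this n hn).1
  intro n hn
  induction n, hn using Nat.le_induction with
  | base => decide
  | succ n _ ih => exact ⟨ih.2, mul_factorial_le_mul_numDerangements_add_two ih.1 ih.2⟩

theorem one_add_pow_lt_two {z : ℝ} {n : ℕ} (hz : 0 ≤ z) (h : n * z < 1 / 2) :
    (1 + z) ^ n < 2 := by
  calc (1 + z) ^ n ≤ Real.exp z ^ n := by gcongr; linarith [Real.add_one_le_exp z]
    _ = Real.exp (n * z) := (Real.exp_nat_mul z n).symm
    _ ≤ 1 / (1 - n * z) := Real.exp_bound_div_one_sub_of_interval (by positivity) (by linarith)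
    _ < 2 := by rw [div_lt_iff₀ (by linarith)]; linarith

theorem eighteen_lt_log_of_three_pow_le {n : ℕ} (hn : 3 ^ 18 ≤ n) : 18 < Real.log n := by
  rw [Real.lt_log_iff_exp_lt (by norm_cast; omega)]
  calc Real.exp 18 = Real.exp 1 ^ 18 := by rw [← Real.exp_nat_mul]; norm_num
    _ < 3 ^ 18 := by gcongr; exact Real.exp_one_lt_three
    _ ≤ n := by exact_mod_cast hn

theorem cube_mul_exp_neg_lt_half {n m : ℕ} (hn : 3 ^ 18 ≤ n)
    (hm : 28 * n * Real.log n - 1 ≤ m) : (n : ℝ) ^ 3 * Real.exp (-m / (9 * n)) < 1 / 2 := by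
  have hn1 : (1 : ℝ) ≤ n := by norm_cast; omega
  have hlog := eighteen_lt_log_of_three_pow_le hn
  have hexp : 3 * Real.log n + -m / (9 * n) < -(17 / 9) := by
    have hdiv : (28 * n * Real.log n - 1) / (9 * n) ≤ m / (9 * n) := by gcongr
    have hsplit : (28 * n * Real.log n - 1) / (9 * n) = 28 * Real.log n / 9 - 1 / (9 * n) := by
      field_simp
    have hsmall : 1 / (9 * (n : ℝ)) ≤ 1 / 9 := by gcongr; linarith
    rw [neg_div]; linarith
  have htwo : 2 < Real.exp (17 / 9) := by linarith [Real.add_one_le_exp (17 / 9)]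
  calc (n : ℝ) ^ 3 * Real.exp (-m / (9 * n)) = Real.exp (3 * Real.log n + -m / (9 * n)) := by
        rw [Real.exp_add, show (3 : ℝ) * Real.log n = (3 : ℕ) * Real.log n by norm_num,
          Real.exp_nat_mul, Real.exp_log (by linarith)]
    _ < Real.exp (-(17 / 9)) := Real.exp_lt_exp.2 hexp
    _ < 1 / 2 := by
        rw [Real.exp_neg, inv_eq_one_div]
        gcongr

theorem exists_tuple_forall_exists_mem_of_sum_lt {Ω ι : Type*} [Fintype Ω] [DecidableEq Ω]
    (T : Finset ι) (G : ι → Finset Ω) (m : ℕ)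
    (h : ∑ t ∈ T, #(G t)ᶜ ^ m < Fintype.card Ω ^ m) :
    ∃ f : Fin m → Ω, ∀ t ∈ T, ∃ s, f s ∈ G t := by
  have hcard : #(T.biUnion fun t => Fintype.piFinset fun _ : Fin m => (G t)ᶜ) <
      #(univ : Finset (Fin m → Ω)) := by
    calc _ ≤ ∑ t ∈ T, #(Fintype.piFinset fun _ : Fin m => (G t)ᶜ) := card_biUnion_le
      _ < _ := by simpa [Fintype.card_piFinset] using h
  obtain ⟨f, -, hf⟩ := exists_mem_notMem_of_card_lt_card hcard
  refine ⟨f, fun t ht => ?_⟩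
  by_contra! hmiss
  exact hf (mem_biUnion.2 ⟨t, ht, Fintype.mem_piFinset.2 fun s => mem_compl.2 (hmiss s)⟩)

section Switch

variable {α : Type*} [DecidableEq α]

def switch (c : α → α) (q : Perm α) (j : α) : Perm α := q * swap j (q⁻¹ (c j))

variable {c : α → α} {q : Perm α} {i j : α}

theorem switch_apply_self : switch c q j j = c j := by
  simp [switch]

theorem switch_apply_inv : switch c q j (q⁻¹ (c j)) = q j := by
  simp [switch]

theorem switch_apply_of_ne (hij : i ≠ j) (hi : i ≠ q⁻¹ (c j)) : switch c q j i = q i := by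
  rw [switch, Perm.mul_apply, swap_apply_of_ne_of_ne hij hi]

theorem switch_mul_swap : switch c q j * swap j (q⁻¹ (c j)) = q := by
  simp [switch, mul_assoc]

end Switch

section Discriminating

variable {α : Type*} [DecidableEq α] [Fintype α]

def avoiding (I : Finset α) (v : α → α) : Finset (Perm α) := {q | ∀ i ∈ I, q i ≠ v i}

def discriminating (I : Finset α) (v c : α → α) : Finset (Perm α) :=
  avoiding I v \ avoiding I c

variable {I : Finset α} {v c : α → α}

theorem mem_avoiding {q : Perm α} : q ∈ avoiding I v ↔ ∀ i ∈ I, q i ≠ v i := by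
  simp [avoiding]

theorem mem_discriminating {q : Perm α} :
    q ∈ discriminating I v c ↔ (∀ i ∈ I, q i ≠ v i) ∧ ∃ i ∈ I, q i = c i := by
  simp [discriminating, mem_avoiding]

theorem avoiding_congr {w : α → α} (h : ∀ i ∈ I, v i = w i) : avoiding I v = avoiding I w := by
  ext q
  simp +contextual only [mem_avoiding, h]

theorem exists_perm_eqOn_of_injOn (hv : Set.InjOn v I) : ∃ σ : Perm α, ∀ i ∈ I, σ i = v i := by
  obtain ⟨g, hg⟩ := exists_equiv_extend_of_card_eq (t := univ) card_univ.symm (subset_univ _) hv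
  exact ⟨g.trans (Equiv.subtypeUnivEquiv mem_univ), hg⟩

theorem numDerangements_le_card_avoiding (hv : Set.InjOn v I) :
    numDerangements (Fintype.card α) ≤ #(avoiding I v) := by
  obtain ⟨σ, hσ⟩ := exists_perm_eqOn_of_injOn hv
  rw [← card_derangements_eq_numDerangements, ← Set.toFinset_card]
  refine card_le_card_of_injOn (σ * ·) (fun d hd => ?_) (fun d _ e _ h => mul_left_cancel h)
  rw [Finset.mem_coe, Set.mem_toFinset] at hd
  rw [mem_coe, mem_avoiding]
  intro i hi h
  exact hd i (σ.injective (h.trans (hσ i hi).symm))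

theorem card_perm_eqOn_le (s : Finset α) (f : α → α) :
    #{q : Perm α | ∀ i ∈ s, q i = f i} ≤ (Fintype.card α - #s)! := by
  obtain h | ⟨q₀, hq₀⟩ := eq_empty_or_nonempty {q : Perm α | ∀ i ∈ s, q i = f i}
  · simp [h]
  have hfix : #{g : Perm α | ∀ i ∈ s, g i = i} = (Fintype.card α - #s)! := by
    calc #{g : Perm α | ∀ i ∈ s, g i = i}
        = Fintype.card {g : Perm α // ∀ i, ¬ i ∉ s → g i = i} := by
          rw [Fintype.card_subtype]; simp
      _ = Fintype.card (Perm {i // i ∉ s}) :=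
          (Fintype.card_congr (Perm.subtypeEquivSubtypePerm _)).symm
      _ = _ := by rw [Fintype.card_perm, Fintype.card_subtype_compl, Fintype.card_coe]
  rw [← hfix]
  simp only [mem_filter, mem_univ, true_and] at hq₀
  refine card_le_card_of_injOn (q₀⁻¹ * ·) (fun q hq => ?_) (fun q _ r _ h => mul_left_cancel h)
  simp only [coe_filter, mem_univ, true_and, Set.mem_ofPred_eq, Perm.mul_apply] at hq ⊢
  intro i hi
  rw [hq i hi, ← hq₀ i hi]
  exact q₀.symm_apply_apply i

theorem switch_mem_discriminating (hc : ∀ i ∈ I, c i ≠ v i) {q : Perm α} (hq : q ∈ avoiding I v)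
    {j : α} (hj : j ∈ I) (hgood : ¬(q⁻¹ (c j) ∈ I ∧ q j = v (q⁻¹ (c j)))) :
    switch c q j ∈ discriminating I v c := by
  rw [mem_avoiding] at hq
  refine mem_discriminating.2 ⟨fun i hi => ?_, j, hj, switch_apply_self⟩
  by_cases hij : i = j
  · subst hij; rw [switch_apply_self]; exact hc i hi
  by_cases hip : i = q⁻¹ (c j)
  · subst hip; rw [switch_apply_inv]; exact fun h => hgood ⟨hi, h⟩
  · rw [switch_apply_of_ne hij hip]; exact hq i hi

theorem card_perm_bad_switch_le {j : α} (hcj : c j ≠ v j) :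
    #{q : Perm α | q⁻¹ (c j) ∈ I ∧ q j = v (q⁻¹ (c j))} ≤ #I * (Fintype.card α - 2)! := by
  have hsub : ({q : Perm α | q⁻¹ (c j) ∈ I ∧ q j = v (q⁻¹ (c j))} : Finset _) ⊆
      (I.erase j).biUnion fun p =>
        {q : Perm α | ∀ i ∈ ({p, j} : Finset α), q i = if i = p then c j else v p} := by
    intro q hq
    simp only [mem_filter, mem_univ, true_and] at hq
    have hpj : q⁻¹ (c j) ≠ j := fun h => hcj <| calc
      c j = q (q⁻¹ (c j)) := (q.apply_symm_apply _).symm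
      _ = v j := by rw [h, hq.2, h]
    simp only [mem_biUnion, mem_erase, mem_filter, mem_univ, true_and, mem_insert,
      mem_singleton, forall_eq_or_imp, forall_eq]
    exact ⟨_, ⟨hpj, hq.1⟩, by simp, by rw [if_neg hpj.symm]; exact hq.2⟩
  calc _ ≤ _ := card_le_card hsub
    _ ≤ ∑ p ∈ I.erase j, (Fintype.card α - 2)! := by
        refine card_biUnion_le.trans (sum_le_sum fun p hp => ?_)
        have : #({p, j} : Finset α) = 2 := card_pair (ne_of_mem_erase hp)
        exact this ▸ card_perm_eqOn_le _ _
    _ ≤ #I * (Fintype.card α - 2)! := by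
        rw [sum_const, smul_eq_mul]; exact Nat.mul_le_mul_right _ card_erase_le

theorem card_switch_fiber_le (q' : Perm α) :
    #{x ∈ avoiding I c ×ˢ I | switch c x.1 x.2 = q'} ≤ 2 * Fintype.card α := by
  obtain hF | ⟨⟨q₀, j₀⟩, h₀⟩ := eq_empty_or_nonempty {x ∈ avoiding I c ×ˢ I | switch c x.1 x.2 = q'}
  · simp [hF]
  simp only [mem_filter, mem_product, mem_avoiding] at h₀
  obtain ⟨⟨hq₀, -⟩, rfl⟩ := h₀
  -- `switch c q₀ j₀` agrees with `q₀`, which avoids `c`, outside two points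
  have hH : {i ∈ I | switch c q₀ j₀ i = c i} ⊆ {j₀, q₀⁻¹ (c j₀)} := by
    intro i hi
    simp only [mem_filter, mem_insert, mem_singleton] at hi ⊢
    by_contra! h
    exact hq₀ i hi.1 (switch_apply_of_ne h.1 h.2 ▸ hi.2)
  calc _ ≤ #({i ∈ I | switch c q₀ j₀ i = c i} ×ˢ (univ : Finset α)) := by
        refine card_le_card_of_injOn (fun x => (x.2, x.1⁻¹ (c x.2))) (fun x hx => ?_) ?_
        · simp only [coe_filter, mem_product, Set.mem_ofPred_eq] at hx
          simp only [coe_product, coe_filter, Set.mem_prod, Set.mem_ofPred_eq, coe_univ,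
            Set.mem_univ, and_true]
          exact ⟨hx.1.2, hx.2 ▸ switch_apply_self⟩
        · rintro ⟨q, j⟩ hx ⟨r, l⟩ hy hxy
          simp only [coe_filter, Set.mem_ofPred_eq, Prod.mk.injEq] at hx hy hxy
          obtain ⟨rfl, hqr⟩ := hxy
          rw [Prod.mk.injEq, ← switch_mul_swap (q := q) (j := j),
            ← switch_mul_swap (q := r) (j := j), hx.2, hy.2, hqr]
          exact ⟨rfl, rfl⟩
    _ ≤ 2 * Fintype.card α := by
        rw [card_product, card_univ]
        exact Nat.mul_le_mul_right _ ((card_le_card hH).trans card_le_two)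

theorem card_mul_card_avoiding_inter_le (hc : ∀ i ∈ I, c i ≠ v i) :
    #I * #(avoiding I v ∩ avoiding I c) ≤
      2 * Fintype.card α * #(discriminating I v c) + #I ^ 2 * (Fintype.card α - 2)! := by
  set P := (avoiding I v ∩ avoiding I c) ×ˢ I
  have hgood : #{x ∈ P | switch c x.1 x.2 ∈ discriminating I v c} ≤
      2 * Fintype.card α * #(discriminating I v c) := by
    refine card_le_mul_card_image_of_maps_to (fun x hx => (mem_filter.1 hx).2) _
      fun q' _ => (card_le_card fun x hx => ?_).trans (card_switch_fiber_le (I := I) (c := c) q')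
    simp only [P, mem_filter, mem_product, mem_inter] at hx ⊢
    exact ⟨⟨hx.1.1.1.2, hx.1.1.2⟩, hx.2⟩
  have hbad : #{x ∈ P | switch c x.1 x.2 ∉ discriminating I v c} ≤
      #I ^ 2 * (Fintype.card α - 2)! := by
    have hsub : {x ∈ P | switch c x.1 x.2 ∉ discriminating I v c} ⊆ I.biUnion fun j =>
        ({q : Perm α | q⁻¹ (c j) ∈ I ∧ q j = v (q⁻¹ (c j))} : Finset _) ×ˢ {j} := by
      rintro ⟨q, j⟩ hx
      simp only [P, mem_filter, mem_product, mem_inter] at hx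
      simp only [mem_biUnion, mem_product, mem_filter, mem_univ, true_and, mem_singleton]
      exact ⟨j, hx.1.2, not_not.1 (hx.2 ∘ switch_mem_discriminating hc hx.1.1.1 hx.1.2), rfl⟩
    calc _ ≤ _ := card_le_card hsub
      _ ≤ ∑ j ∈ I, #I * (Fintype.card α - 2)! := card_biUnion_le.trans <| sum_le_sum fun j hj => by
          rw [card_product, card_singleton, mul_one]
          exact card_perm_bad_switch_le (hc j hj)
      _ = _ := by rw [sum_const, smul_eq_mul]; ring
  calc #I * #(avoiding I v ∩ avoiding I c) = #P := by rw [card_product, mul_comm]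
    _ = _ := (card_filter_add_card_filter_not _).symm
    _ ≤ _ := add_le_add hgood hbad

theorem card_mul_factorial_le_card_discriminating (hn : 31 ≤ Fintype.card α)
    (hv : Set.InjOn v I) (hc : ∀ i ∈ I, c i ≠ v i) :
    #I * (Fintype.card α)! ≤ 9 * Fintype.card α * #(discriminating I v c) := by
  set n := Fintype.card α
  have havoid : 11 * n ! ≤ 30 * #(avoiding I v) :=
    (eleven_mul_factorial_le_thirty_mul_numDerangements (by omega)).trans
      (Nat.mul_le_mul_left _ (numDerangements_le_card_avoiding hv))
  have hsplit : #(avoiding I v) = #(discriminating I v c) + #(avoiding I v ∩ avoiding I c) :=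
    (card_sdiff_add_card_inter _ _).symm
  have hpairs := card_mul_card_avoiding_inter_le hc
  have hI : #I ≤ n := card_le_univ I
  have hrare : 30 * #I ^ 2 * (n - 2)! ≤ #I * n ! := by
    obtain ⟨m, hm⟩ : ∃ m, n = m + 2 := ⟨n - 2, by omega⟩
    rw [hm, Nat.add_sub_cancel, Nat.factorial_succ, Nat.factorial_succ]
    have : 30 * #I ≤ (m + 2) * (m + 1) := by nlinarith
    calc 30 * #I ^ 2 * m ! = #I * (30 * #I * m !) := by ring
      _ ≤ #I * ((m + 2) * (m + 1) * m !) := by gcongr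
      _ = _ := by ring
  nlinarith

theorem card_compl_discriminating_pow_le (hn : 31 ≤ Fintype.card α) (hv : Set.InjOn v I)
    (hc : ∀ i ∈ I, c i ≠ v i) (m : ℕ) :
    (#(discriminating I v c)ᶜ : ℝ) ^ m ≤
      ((Fintype.card α)! : ℝ) ^ m * Real.exp (-m / (9 * Fintype.card α)) ^ #I := by
  set n := Fintype.card α
  have hkey : (#I : ℝ) * n ! ≤ 9 * n * #(discriminating I v c) := by
    exact_mod_cast card_mul_factorial_le_card_discriminating hn hv hc
  have hcompl : (#(discriminating I v c)ᶜ : ℝ) ≤ n ! * Real.exp (-(#I / (9 * n))) := by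
    rw [card_compl, Nat.cast_sub (card_le_univ _), Fintype.card_perm]
    have hfrac : (n ! : ℝ) * (#I / (9 * n)) ≤ #(discriminating I v c) := by
      rw [mul_div_assoc', div_le_iff₀ (by positivity)]; linarith
    calc (n ! : ℝ) - #(discriminating I v c) ≤ n ! * (1 - #I / (9 * n)) := by
          rw [mul_one_sub]; linarith
      _ ≤ _ := by gcongr; exact Real.one_sub_le_exp_neg _
  calc _ ≤ ((n ! : ℝ) * Real.exp (-(#I / (9 * n)))) ^ m := by gcongr
    _ = _ := by
        rw [mul_pow, ← Real.exp_nat_mul, ← Real.exp_nat_mul]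
        ring_nf

/-- Colourings of `I`, extended by the identity outside `I` so that each is counted once. -/
def colouringsOn (I : Finset α) : Finset (α → α) :=
  Fintype.piFinset fun i => if i ∈ I then univ else {i}

theorem card_colouringsOn (I : Finset α) : #(colouringsOn I) = Fintype.card α ^ #I := by
  simp [colouringsOn, Fintype.card_piFinset, apply_ite card, prod_ite_mem]

theorem piecewise_mem_colouringsOn (v : α → α) : I.piecewise v id ∈ colouringsOn I := by
  simp only [colouringsOn, Fintype.mem_piFinset]
  intro i
  by_cases hi : i ∈ I <;> simp [hi]

variable (α) in
def validTriples : Finset (Σ _ : Finset α, (α → α) × (α → α)) :=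
  (univ.erase ∅).sigma fun I =>
    {vc ∈ colouringsOn I ×ˢ colouringsOn I | Set.InjOn vc.1 I ∧ ∀ i ∈ I, vc.2 i ≠ vc.1 i}

theorem sum_pow_card_erase_empty {R : Type*} [CommRing R] (a : R) :
    ∑ I ∈ (univ : Finset (Finset α)).erase ∅, a ^ #I = (1 + a) ^ Fintype.card α - 1 := by
  rw [sum_erase_eq_sub (mem_univ _), card_empty, pow_zero, add_comm 1 a,
    ← Fintype.sum_pow_mul_eq_add_pow]
  simp

theorem sum_card_compl_discriminating_pow_lt (hn : 3 ^ 18 ≤ Fintype.card α) {m : ℕ}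
    (hm : 28 * Fintype.card α * Real.log (Fintype.card α) - 1 ≤ m) :
    ∑ t ∈ validTriples α, #(discriminating t.1 t.2.1 t.2.2)ᶜ ^ m <
      Fintype.card (Perm α) ^ m := by
  set n := Fintype.card α
  set x := Real.exp (-m / (9 * n))
  rw [Fintype.card_perm, ← Nat.cast_lt (α := ℝ)]
  push_cast
  calc ∑ t ∈ validTriples α, (#(discriminating t.1 t.2.1 t.2.2)ᶜ : ℝ) ^ m
      ≤ ∑ t ∈ validTriples α, (n ! : ℝ) ^ m * x ^ #t.1 := sum_le_sum fun t ht => by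
        simp only [validTriples, mem_sigma, mem_filter] at ht
        exact card_compl_discriminating_pow_le (by omega) ht.2.2.1 ht.2.2.2 m
    _ ≤ ∑ t ∈ (univ.erase ∅).sigma fun I => colouringsOn I ×ˢ colouringsOn I,
          (n ! : ℝ) ^ m * x ^ #t.1 :=
        sum_le_sum_of_subset_of_nonneg (sigma_mono subset_rfl fun _ => filter_subset _ _)
          fun _ _ _ => by positivity
    _ = (n ! : ℝ) ^ m * ∑ I ∈ univ.erase ∅, (n ^ 2 * x) ^ #I := by
        rw [sum_sigma, mul_sum]
        refine sum_congr rfl fun I _ => ?_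
        dsimp only
        rw [sum_const, card_product, card_colouringsOn, nsmul_eq_mul]
        push_cast
        ring
    _ = (n ! : ℝ) ^ m * ((1 + n ^ 2 * x) ^ n - 1) := by rw [sum_pow_card_erase_empty]
    _ < (n ! : ℝ) ^ m := by
        have hpow : (1 + n ^ 2 * x) ^ n < 2 := one_add_pow_lt_two (by positivity) <| by
          convert cube_mul_exp_neg_lt_half hn hm using 1; ring
        have : (0 : ℝ) < (n ! : ℝ) ^ m := by positivity
        nlinarith

theorem exists_finset_perm_discriminating (hn : 3 ^ 18 ≤ Fintype.card α) :
    ∃ Q : Finset (Perm α), (#Q : ℝ) ≤ 28 * Fintype.card α * Real.log (Fintype.card α) ∧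
      ∀ I : Finset α, I.Nonempty → ∀ v c : α → α, Set.InjOn v I → (∀ i ∈ I, c i ≠ v i) →
        ∃ q ∈ Q, q ∈ discriminating I v c := by
  set n := Fintype.card α
  set m := ⌊28 * n * Real.log n⌋₊
  have hm : 28 * n * Real.log n - 1 ≤ m := by
    linarith [Nat.lt_floor_add_one (28 * n * Real.log n)]
  obtain ⟨f, hf⟩ := exists_tuple_forall_exists_mem_of_sum_lt (validTriples α)
    (fun t => discriminating t.1 t.2.1 t.2.2) m (sum_card_compl_discriminating_pow_lt hn hm)
  refine ⟨univ.image f, ?_, fun I hI v c hv hc => ?_⟩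
  · calc (#(univ.image f) : ℝ) ≤ m := by exact_mod_cast card_image_le.trans (by simp)
      _ ≤ _ := Nat.floor_le (by positivity)
  have hv' : ∀ i ∈ I, I.piecewise v id i = v i := fun i hi => I.piecewise_eq_of_mem _ _ hi
  have hc' : ∀ i ∈ I, I.piecewise c id i = c i := fun i hi => I.piecewise_eq_of_mem _ _ hi
  obtain ⟨s, hs⟩ := hf ⟨I, I.piecewise v id, I.piecewise c id⟩ <| by
    simp only [validTriples, mem_sigma, mem_erase, mem_univ, mem_filter, mem_product]
    refine ⟨⟨hI.ne_empty, trivial⟩, ⟨piecewise_mem_colouringsOn v, piecewise_mem_colouringsOn c⟩,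
      hv.congr fun i hi => (hv' i hi).symm, fun i hi => ?_⟩
    rw [hv' i hi, hc' i hi]; exact hc i hi
  refine ⟨f s, mem_image_of_mem _ (mem_univ s), ?_⟩
  rwa [discriminating, avoiding_congr hv', avoiding_congr hc'] at hs

end Discriminating

/-- There is a set `Q` of at most `28 n log n` permutations such that for every
nonempty `I`, valid colouring `v` and colouring `c` disjoint from `v` on `I`,
some `q ∈ Q` discriminates `v` from `c` on `I`. -/
theorem stmt_9 :
    ∃ (C : ℝ) (n₀ : ℕ), C = 28 ∧ ∀ n ≥ n₀,
      ∃ Q : Finset (Equiv.Perm (Fin n)),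
        (Q.card : ℝ) ≤ C * n * Real.log n ∧
        ∀ (I : Finset (Fin n)), I.Nonempty →
          ∀ (v c : Fin n → Fin n), Set.InjOn v I →
            (∀ i ∈ I, c i ≠ v i) →
            ∃ q ∈ Q, (∀ i ∈ I, q i ≠ v i) ∧ ∃ i ∈ I, q i = c i := by
  refine ⟨28, 3 ^ 18, rfl, fun n hn => ?_⟩
  obtain ⟨Q, hQ, hdisc⟩ := exists_finset_perm_discriminating (α := Fin n) (by simpa using hn)
  refine ⟨Q, by simpa using hQ, fun I hI v c hv hc => ?_⟩
  obtain ⟨q, hq, hqd⟩ := hdisc I hI v c hv hc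
  exact ⟨q, hq, mem_discriminating.1 hqd⟩
end

section
/- Suppose Q is a set of permutations of [n] such that for every nonempty I ⊆ [n], every injective v : I → [n], and every c : I → [n] with c(i) ≠ v(i) for all i ∈ I, some q ∈ Q satisfies q(i) ≠ v(i) for all i ∈ I and q(i) = c(i) for some i ∈ I. Then for any two distinct permutations σ, τ of [n], there exists q ∈ Q with |{i : q(i) = σ(i)}| ≠ |{i : q(i) = τ(i)}|. In other words, the map σ ↦ (|{i : q(i) = σ(i)}|)_{q∈Q} is injective on permutations. -/
open Finset

/-- If `Q` has the discrimination property, then the answer vector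
`σ ↦ (#{i : q i = σ i})_{q ∈ Q}` is injective on permutations. -/
theorem stmt_10 (n : ℕ) (Q : Finset (Equiv.Perm (Fin n)))
    (hQ : ∀ (I : Finset (Fin n)), I.Nonempty →
      ∀ (v c : Fin n → Fin n), Set.InjOn v I → (∀ i ∈ I, c i ≠ v i) →
        ∃ q ∈ Q, (∀ i ∈ I, q i ≠ v i) ∧ ∃ i ∈ I, q i = c i) :
    ∀ σ τ : Equiv.Perm (Fin n), σ ≠ τ →
      ∃ q ∈ Q,
        (Finset.univ.filter (fun i => q i = σ i)).card ≠
          (Finset.univ.filter (fun i => q i = τ i)).card := by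
  intro σ τ hst
  set D : Finset (Fin n) := Finset.univ.filter (fun i => σ i ≠ τ i) with hD
  have hDne : D.Nonempty := by
    by_contra h
    apply hst
    apply Equiv.ext
    intro i
    by_contra hi
    exact h ⟨i, by simp [hD, hi]⟩
  obtain ⟨q, hqQ, h1, i0, hi0D, hq0⟩ :=
    hQ D hDne τ σ (τ.injective.injOn) (fun i hi => by simpa [hD] using hi)
  refine ⟨q, hqQ, ?_⟩
  have hsub : Finset.univ.filter (fun i => q i = τ i) ⊂
      Finset.univ.filter (fun i => q i = σ i) := by
    constructor
    · intro i hi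
      simp only [mem_filter, mem_univ, true_and] at hi ⊢
      have hiD : i ∉ D := fun hiD => h1 i hiD hi
      have : σ i = τ i := by
        by_contra h'
        exact hiD (by simp [hD, h'])
      rw [this]; exact hi
    · intro hcon
      have hi0 : i0 ∈ Finset.univ.filter (fun i => q i = σ i) := by
        simp [hq0]
      have := hcon hi0
      simp only [mem_filter, mem_univ, true_and] at this
      have hne : σ i0 ≠ τ i0 := by simpa [hD] using hi0D
      exact hne (hq0 ▸ this ▸ rfl)
  exact Ne.symm (Nat.ne_of_lt (Finset.card_lt_card hsub))
end

section
/- Suppose Q is a set of permutations of [n] with the discrimination property: for every nonempty I ⊆ [n], injective v : I → [n], and c : I → [n] with c(i) ≠ v(i) for all i ∈ I, some q ∈ Q avoids v on I but agrees with c somewhere on I. Then for every nonempty I ⊆ [n] and every injective v : I → [n], letting Q_I = {q ∈ Q : q(i) ≠ v(i) for all i ∈ I}, there exists i ∈ I such that {v(i)} ∪ {q(i) : q ∈ Q_I} = [n]. -/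
open Finset

/-- Key reconstruction step: for every nonempty `I` and valid colouring `v`,
some position `i ∈ I` has `{v i} ∪ {q i : q ∈ Q_I} = [n]`. -/
theorem stmt_11 (n : ℕ) (Q : Finset (Equiv.Perm (Fin n)))
    (hQ : ∀ (I : Finset (Fin n)), I.Nonempty →
      ∀ (v c : Fin n → Fin n), Set.InjOn v I → (∀ i ∈ I, c i ≠ v i) →
        ∃ q ∈ Q, (∀ i ∈ I, q i ≠ v i) ∧ ∃ i ∈ I, q i = c i) :
    ∀ (I : Finset (Fin n)), I.Nonempty → ∀ (v : Fin n → Fin n), Set.InjOn v I →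
      ∃ i ∈ I, ∀ x : Fin n,
        x = v i ∨ ∃ q ∈ Q, (∀ j ∈ I, q j ≠ v j) ∧ q i = x := by
  intro I hI v hv
  by_contra h
  push_neg at h
  choose x hx1 hx2 using h
  set c : Fin n → Fin n := fun i => if hi : i ∈ I then x i hi else v i with hc
  obtain ⟨q, hqQ, hqv, i, hiI, hqi⟩ := hQ I hI v c hv (by
    intro i hi
    simp only [hc, dif_pos hi]
    exact hx1 i hi)
  have := hx2 i hiI q hqQ hqv
  simp only [hc, dif_pos hiI] at hqi
  exact this hqi
end
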